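/- arXiv:1806.08869 — 3 statements merged into one kernel-verified Lean document; each statement's English description precedes it below -/
import Mathlib

section
/- For all γ > 0 and α ∈ (0,1], the quantity C_c(γ,α,0) := γ√α + 1 − (1+γ)^{3/2}·√(α/(γ+α)) is nonnegative, with equality if and only if α = 1. -/
theorem CcH_eps_zero_nonneg (γ α : ℝ) (hγ : 0 < γ) (hα : α ∈ Set.Ioc (0 : ℝ) 1) :
    0 ≤ γ * Real.sqrt α + 1 - (1 + γ) ^ ((3 : ℝ) / 2) * Real.sqrt (α / (γ + α)) ∧
    (γ * Real.sqrt α + 1 - (1 + γ) ^ ((3 : ℝ) / 2) * Real.sqrt (α / (γ + α)) = 0 ↔ α = 1) := by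
  obtain ⟨hα0, hα1⟩ := hα
  set s := Real.sqrt α with hs
  have hs0 : 0 < s := Real.sqrt_pos.mpr hα0
  have hs2 : s ^ 2 = α := Real.sq_sqrt hα0.le
  have hs1 : s ≤ 1 := by
    rw [hs, show (1 : ℝ) = Real.sqrt 1 from Real.sqrt_one.symm]
    exact Real.sqrt_le_sqrt hα1
  have hga : 0 < γ + α := by linarith
  have h1g : (0 : ℝ) ≤ 1 + γ := by linarith
  set T := (1 + γ) ^ ((3 : ℝ) / 2) * Real.sqrt (α / (γ + α)) with hTdef
  have hT0 : 0 ≤ T := mul_nonneg (Real.rpow_nonneg h1g _) (Real.sqrt_nonneg _)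
  have hTsq : T ^ 2 = (1 + γ) ^ 3 * (α / (γ + α)) := by
    rw [hTdef, mul_pow, Real.sq_sqrt (by positivity)]
    congr 1
    rw [← Real.rpow_natCast ((1 + γ) ^ ((3 : ℝ) / 2)) 2, ← Real.rpow_mul h1g,
      ← Real.rpow_natCast (1 + γ) 3]
    norm_num
  have key : T ^ 2 * (γ + α) = (1 + γ) ^ 3 * α := by
    rw [hTsq]; field_simp
  have hA : 0 < γ * s + 1 := by positivity
  have hP : (1 + γ) ^ 3 * α ≤ (γ * s + 1) ^ 2 * (γ + α) := by
    rw [← hs2]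
    nlinarith [mul_nonneg (mul_nonneg hγ.le (sq_nonneg (s - 1)))
      (show (0 : ℝ) ≤ γ * s ^ 2 + 2 * γ * s + 2 * s + 1 by positivity)]
  have hsqle : T ^ 2 ≤ (γ * s + 1) ^ 2 := by
    have h := key.le.trans hP
    exact le_of_mul_le_mul_right h hga
  have hTA : T ≤ γ * s + 1 := by nlinarith [hsqle, hT0, hA]
  refine ⟨by linarith, ?_, ?_⟩
  · intro h0
    have hTeq : T = γ * s + 1 := by linarith
    rw [hTeq, ← hs2] at key
    have hfac : γ * (s - 1) ^ 2 * (γ * s ^ 2 + 2 * γ * s + 2 * s + 1) = 0 := by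
      linear_combination key
    have h2 : (s - 1) ^ 2 = 0 := by
      by_contra h
      have hpos : 0 < (s - 1) ^ 2 := lt_of_le_of_ne (sq_nonneg _) (Ne.symm h)
      have : 0 < γ * (s - 1) ^ 2 * (γ * s ^ 2 + 2 * γ * s + 2 * s + 1) := by positivity
      linarith
    have hse : s = 1 := by
      have := (pow_eq_zero_iff two_ne_zero).mp h2
      linarith
    rw [← hs2, hse]; norm_num
  · intro h1
    subst h1
    have hseq : s = 1 := by rw [hs, Real.sqrt_one]
    have hTval : T = γ + 1 := by
      have hsq : T ^ 2 = (γ + 1) ^ 2 := by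
        rw [hTsq]; field_simp; ring
      have hfac : (T - (γ + 1)) * (T + (γ + 1)) = 0 := by linear_combination hsq
      rcases mul_eq_zero.mp hfac with h | h
      · linarith
      · linarith
    rw [hseq, hTval]; ring
end

section
/- First-order expansion of the close-planets Hill criterion: with δ = 1 − α and neglecting terms of order δ³, ε^{2/3}δ and ε, the function C_c^H(α) = γ√α + 1 − (1+γ)^{3/2}√(α(1+c)/(γ+α)), c = 3^{4/3}ε^{2/3}γ/(1+γ)², satisfies C_c^H = (3γ/(8(γ+1)))·δ² − (3^{4/3}γ/(2(γ+1)))·ε^{2/3} + O(δ³) + O(ε^{2/3}δ) + O(ε). Formally: the second-order Taylor polynomial of α ↦ γ√α + 1 − (1+γ)^{3/2}√(α/(γ+α)) at α = 1 is (3γ/(8(γ+1)))(1−α)², and the first-order Taylor coefficient of c ↦ −(1+γ)^{3/2}√((1+c)/(γ+1)) at c = 0 evaluated at α = 1 is −(γ+1)/2... i.e., the linear-in-c term at α = 1 equals −(γ+1)c/2 = −(3^{4/3}γ/(2(γ+1)))ε^{2/3}. -/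
/-!
With `K = (1 + γ) ^ (3/2)`, the derivative of `f α = γ √α + 1 - K √(α / (γ + α))` factors as
`f' α = γ / (2 √α) · (1 - K (γ + α) ^ (-3/2))`. The second factor vanishes at `α = 1` precisely
because of the choice of `K`, so `f' 1 = 0` and `f'' 1 = γ/2 · (3/2) K (γ + 1) ^ (-5/2) = 3γ / (4(γ + 1))`.
The term linear in `c` is immediate from `K √((1 + c) / (γ + 1)) = (γ + 1) √(1 + c)`.
-/

open Real Filter Topology

namespace Hill

noncomputable def criterion (γ K : ℝ) (α : ℝ) : ℝ := γ * √α + 1 - K * √(α / (γ + α))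

noncomputable def criterionDeriv (γ K : ℝ) (x : ℝ) : ℝ :=
  γ / 2 * x ^ (-(1 / 2 : ℝ)) * (1 - K * (γ + x) ^ (-(3 / 2 : ℝ)))

lemma inv_sqrt_eq_rpow {x : ℝ} (hx : 0 ≤ x) : (√x)⁻¹ = x ^ (-(1 / 2 : ℝ)) := by
  rw [sqrt_eq_rpow, rpow_neg hx]

lemma rpow_three_halves_div_sqrt {s : ℝ} (hs : 0 < s) : s ^ (3 / 2 : ℝ) / √s = s := by
  rw [sqrt_eq_rpow, ← rpow_sub hs]
  norm_num

lemma sqrt_div_add_eq_rpow {γ x : ℝ} (hγx : 0 < γ + x) :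
    √(x / (γ + x)) = x ^ (1 / 2 : ℝ) * (γ + x) ^ (-(1 / 2 : ℝ)) := by
  rw [sqrt_div' _ hγx.le, div_eq_mul_inv, inv_sqrt_eq_rpow hγx.le, sqrt_eq_rpow]

lemma hasDerivAt_sqrt_div_add {γ x : ℝ} (hx : 0 < x) (hγx : 0 < γ + x) :
    HasDerivAt (fun α => √(α / (γ + α)))
      (γ / 2 * x ^ (-(1 / 2 : ℝ)) * (γ + x) ^ (-(3 / 2 : ℝ))) x := by
  have hnum : HasDerivAt (fun α : ℝ => α ^ (1 / 2 : ℝ)) (1 / 2 * x ^ (-(1 / 2 : ℝ))) x := by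
    convert hasDerivAt_rpow_const (p := 1 / 2) (Or.inl hx.ne') using 2; norm_num
  have hden : HasDerivAt (fun α : ℝ => (γ + α) ^ (-(1 / 2 : ℝ)))
      (-(1 / 2) * (γ + x) ^ (-(3 / 2 : ℝ))) x := by
    convert ((hasDerivAt_id x).const_add γ).rpow_const (p := -(1 / 2)) (Or.inl hγx.ne')
      using 1; simp only [id]; norm_num
  refine ((hnum.mul hden).congr_deriv ?_).congr_of_eventuallyEq ?_
  · have hx' : x ^ (1 / 2 : ℝ) = x * x ^ (-(1 / 2 : ℝ)) := by
      rw [← rpow_one_add' hx.le (by norm_num)]; norm_num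
    have hγx' : (γ + x) ^ (-(1 / 2 : ℝ)) = (γ + x) * (γ + x) ^ (-(3 / 2 : ℝ)) := by
      rw [← rpow_one_add' hγx.le (by norm_num)]; norm_num
    rw [hx', hγx']; ring
  · filter_upwards [eventually_gt_nhds (show -γ < x by linarith)] with α hγα
    exact sqrt_div_add_eq_rpow (by linarith)

lemma hasDerivAt_criterion (γ K : ℝ) {x : ℝ} (hx : 0 < x) (hγx : 0 < γ + x) :
    HasDerivAt (criterion γ K) (criterionDeriv γ K x) x := by
  have h := (((hasDerivAt_sqrt hx.ne').const_mul γ).add_const 1).sub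
    ((hasDerivAt_sqrt_div_add hx hγx).const_mul K)
  refine h.congr_deriv ?_
  rw [criterionDeriv, one_div, mul_inv, inv_sqrt_eq_rpow hx.le]; ring

lemma deriv_criterion_eventuallyEq (γ K : ℝ) {x : ℝ} (hx : 0 < x) (hγx : 0 < γ + x) :
    deriv (criterion γ K) =ᶠ[𝓝 x] criterionDeriv γ K := by
  filter_upwards [eventually_gt_nhds hx, eventually_gt_nhds (show -γ < x by linarith)]
    with α hα hγα
  exact (hasDerivAt_criterion γ K hα (by linarith)).deriv

lemma hasDerivAt_criterionDeriv (γ K : ℝ) {x : ℝ} (hx : 0 < x) (hγx : 0 < γ + x) :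
    HasDerivAt (criterionDeriv γ K)
      (γ / 2 * (-(1 / 2) * x ^ (-(3 / 2 : ℝ)) * (1 - K * (γ + x) ^ (-(3 / 2 : ℝ))) +
        x ^ (-(1 / 2 : ℝ)) * (3 / 2 * K * (γ + x) ^ (-(5 / 2 : ℝ))))) x := by
  have hfst : HasDerivAt (fun α : ℝ => α ^ (-(1 / 2 : ℝ))) (-(1 / 2) * x ^ (-(3 / 2 : ℝ))) x := by
    convert hasDerivAt_rpow_const (p := -(1 / 2)) (Or.inl hx.ne') using 2; norm_num
  have hsnd : HasDerivAt (fun α : ℝ => (γ + α) ^ (-(3 / 2 : ℝ)))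
      (-(3 / 2) * (γ + x) ^ (-(5 / 2 : ℝ))) x := by
    convert ((hasDerivAt_id x).const_add γ).rpow_const (p := -(3 / 2)) (Or.inl hγx.ne')
      using 1; simp only [id]; norm_num
  exact ((hfst.const_mul (γ / 2)).mul ((hsnd.const_mul K).const_sub 1)).congr_deriv (by ring)

end Hill

open Hill in
theorem hill_close_planets_taylor (γ : ℝ) (hγ : 0 < γ) :
    (γ * Real.sqrt 1 + 1 - (1 + γ) ^ ((3 : ℝ) / 2) * Real.sqrt (1 / (γ + 1)) = 0) ∧
    (deriv (fun α : ℝ => γ * Real.sqrt α + 1 -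
        (1 + γ) ^ ((3 : ℝ) / 2) * Real.sqrt (α / (γ + α))) 1 = 0) ∧
    (deriv (deriv (fun α : ℝ => γ * Real.sqrt α + 1 -
        (1 + γ) ^ ((3 : ℝ) / 2) * Real.sqrt (α / (γ + α)))) 1 = 3 * γ / (4 * (γ + 1))) ∧
    (deriv (fun c : ℝ => -((1 + γ) ^ ((3 : ℝ) / 2) *
        Real.sqrt (1 * (1 + c) / (γ + 1)))) 0 = -((γ + 1) / 2)) := by
  have hs : 0 < γ + 1 := by linarith
  have hK : (1 + γ) ^ (3 / 2 : ℝ) = (γ + 1) ^ (3 / 2 : ℝ) := by rw [add_comm]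
  have hK₃ : (γ + 1) ^ (3 / 2 : ℝ) * (γ + 1) ^ (-(3 / 2 : ℝ)) = 1 := by
    rw [← rpow_add hs]; norm_num
  have hK₅ : (γ + 1) ^ (3 / 2 : ℝ) * (γ + 1) ^ (-(5 / 2 : ℝ)) = (γ + 1)⁻¹ := by
    rw [← rpow_add hs, ← rpow_neg_one]; norm_num
  refine ⟨?_, ?_, ?_, ?_⟩
  · rw [sqrt_one, one_div, sqrt_inv, hK, ← div_eq_mul_inv, rpow_three_halves_div_sqrt hs]
    ring
  · change deriv (criterion γ _) 1 = 0
    rw [(hasDerivAt_criterion γ _ one_pos (by linarith)).deriv, criterionDeriv, hK, hK₃]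
    ring
  · change deriv (deriv (criterion γ _)) 1 = _
    rw [(deriv_criterion_eventuallyEq γ _ one_pos (by linarith)).deriv_eq,
      (hasDerivAt_criterionDeriv γ _ one_pos (by linarith)).deriv]
    simp only [one_rpow, one_mul]
    rw [hK, mul_assoc (3 / 2 : ℝ), hK₅, hK₃]
    field_simp
    ring
  · have hsqrt : HasDerivAt (fun c : ℝ => √(1 + c)) (1 / 2) 0 := by
      simpa using ((hasDerivAt_id (0 : ℝ)).const_add 1).sqrt (by norm_num)
    have hfun : (fun c : ℝ => -((1 + γ) ^ (3 / 2 : ℝ) * √(1 * (1 + c) / (γ + 1)))) =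
        fun c => -(γ + 1) * √(1 + c) := by
      ext c
      rw [one_mul, sqrt_div' _ hs.le, hK]
      conv_rhs => rw [← rpow_three_halves_div_sqrt hs]
      ring
    rw [hfun, (hsqrt.const_mul _).deriv]
    ring
end

section
/- For α ∈ (0,1) and γ > 0, the ε = 0 critical AMD f(α) = γ√α + 1 − (1+γ)^{3/2}√(α/(γ+α)) is strictly positive on (0,1), and f(α) → 1 as α → 0⁺. -/
open Filter Topology in
theorem CcH_eps_zero_pos_and_limit (γ : ℝ) (hγ : 0 < γ) :
    (∀ α ∈ Set.Ioo (0 : ℝ) 1,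
      0 < γ * Real.sqrt α + 1 - (1 + γ) ^ ((3 : ℝ) / 2) * Real.sqrt (α / (γ + α))) ∧
    Tendsto (fun α : ℝ => γ * Real.sqrt α + 1 - (1 + γ) ^ ((3 : ℝ) / 2) * Real.sqrt (α / (γ + α)))
      (𝓝[>] 0) (𝓝 1) := by
  have h1γ : (0:ℝ) ≤ 1 + γ := by linarith
  have hrpow : (1 + γ) ^ ((3 : ℝ) / 2) = Real.sqrt ((1 + γ) ^ 3) := by
    rw [Real.sqrt_eq_rpow, ← Real.rpow_natCast (1 + γ) 3, ← Real.rpow_mul h1γ]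
    norm_num
  constructor
  · rintro α ⟨hα0, hα1⟩
    set s := Real.sqrt α with hs
    have hs0 : 0 < s := Real.sqrt_pos.mpr hα0
    have hs1 : s < 1 := by
      rw [hs, show (1:ℝ) = Real.sqrt 1 by simp]
      exact Real.sqrt_lt_sqrt hα0.le hα1
    have hs2 : s ^ 2 = α := Real.sq_sqrt hα0.le
    have hgα : 0 < γ + α := by linarith
    have hy : 0 < γ * s + 1 := by positivity
    have hmul : (1 + γ) ^ ((3 : ℝ) / 2) * Real.sqrt (α / (γ + α))
        = Real.sqrt ((1 + γ) ^ 3 * (α / (γ + α))) := by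
      rw [hrpow, ← Real.sqrt_mul (by positivity)]
    rw [sub_pos, hmul]
    rw [Real.sqrt_lt' hy]
    rw [← mul_div_assoc, div_lt_iff₀ hgα]
    have key : 0 < γ * (1 - s) ^ 2 * (γ * s ^ 2 + (2 * γ + 2) * s + 1) := by
      have h2 : (0:ℝ) < (1 - s) ^ 2 := pow_pos (by linarith) 2
      have h3 : (0:ℝ) < γ * s ^ 2 + (2 * γ + 2) * s + 1 := by positivity
      positivity
    rw [← hs2]
    nlinarith [key]
  · have hcont : ContinuousAt (fun α : ℝ =>
        γ * Real.sqrt α + 1 - (1 + γ) ^ ((3 : ℝ) / 2) * Real.sqrt (α / (γ + α))) 0 := by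
      have h1 : ContinuousAt (fun α : ℝ => α / (γ + α)) 0 :=
        continuousAt_id.div (continuousAt_const.add continuousAt_id) (by simpa using hγ.ne')
      exact ((continuousAt_const.mul Real.continuous_sqrt.continuousAt).add
        continuousAt_const).sub
        (continuousAt_const.mul (Real.continuous_sqrt.continuousAt.comp h1))
    have h := hcont.tendsto.mono_left (nhdsWithin_le_nhds (s := Set.Ioi (0:ℝ)))
    have h0 : γ * Real.sqrt 0 + 1 - (1 + γ) ^ ((3 : ℝ) / 2) * Real.sqrt (0 / (γ + 0)) = 1 := by
      simp
    rwa [h0] at h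
end
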